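/- If ℐ is a superequivalence on a set S, then Z(ℐ) = the ideal of filters of relations generated by the principal filters Fg{J} for J ∈ ℐ is a superuniformity on S; moreover the mapping ℐ ↦ Z(ℐ) preserves binary meets and arbitrary joins of superequivalences. -/

import Mathlib

open Filter Set

variable {α : Type*}

/-- The identity relation (Mathlib's former `idRel`, removed upstream). -/
def idRel {α : Type*} :=
  { p : α × α | p.1 = p.2 }

/-- Composition of relations (Mathlib's former `compRel`, removed upstream). -/
def compRel {α : Type*} (r₁ r₂ : Set (α × α)) :=
  { p : α × α | ∃ z : α, (p.1, z) ∈ r₁ ∧ (z, p.2) ∈ r₂ }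

/-- Composition of filters of relations: the filter generated by compositions
of members. -/
def fComp (F G : Filter (α × α)) : Filter (α × α) :=
  F.lift fun U => G.lift' fun V => compRel U V

/-- An ideal in the lattice of filters of relations (filters carry the
reverse-inclusion order, which is Mathlib's order on `Filter`): nonempty,
downward closed, and closed under finite joins. -/
def IsFilIdeal (ℰ : Set (Filter (α × α))) : Prop :=
  ℰ.Nonempty ∧ (∀ F ∈ ℰ, ∀ G ≤ F, G ∈ ℰ) ∧ (∀ F ∈ ℰ, ∀ G ∈ ℰ, F ⊔ G ∈ ℰ)

/-- A superuniformity: an ideal of filters of relations containing the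
principal filter on the diagonal, closed under opposites of filters, and
closed under composition of filters. -/
def IsSuperUnif (ℰ : Set (Filter (α × α))) : Prop :=
  IsFilIdeal ℰ ∧ 𝓟 idRel ∈ ℰ ∧ (∀ F ∈ ℰ, Filter.map Prod.swap F ∈ ℰ) ∧
    (∀ F ∈ ℰ, ∀ G ∈ ℰ, fComp F G ∈ ℰ)

/-- Composition of ideals of filters: the ideal generated by the filter
compositions of members (a directed family, hence the downward closure). -/
def filIdealComp (ℰ ℰ' : Set (Filter (α × α))) : Set (Filter (α × α)) :=
  {H | ∃ F ∈ ℰ, ∃ G ∈ ℰ', H ≤ fComp F G}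

/-- Composition of a nonempty list of filters of relations. -/
def filListComp : List (Filter (α × α)) → Filter (α × α)
  | [] => 𝓟 idRel
  | [F] => F
  | F :: G :: l => fComp F (filListComp (G :: l))

/-- The set of finite (nonempty) compositions of filters from `X`. -/
def filComps (X : Set (Filter (α × α))) : Set (Filter (α × α)) :=
  {H | ∃ l : List (Filter (α × α)), l ≠ [] ∧ (∀ F ∈ l, F ∈ X) ∧ H = filListComp l}

/-- The ideal of filters generated by a set `G` of filters: everything below a
finite join of members. -/
def filIdealGen (G : Set (Filter (α × α))) : Set (Filter (α × α)) :=
  {H | ∃ s : Finset (Filter (α × α)), ↑s ⊆ G ∧ H ≤ s.sup id}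

/-- The join of two superuniformities: the ideal generated by all finite
compositions of filters from their union. -/
def suJoin (ℰ ℰ' : Set (Filter (α × α))) : Set (Filter (α × α)) :=
  filIdealGen (filComps (ℰ ∪ ℰ'))

/-- The join of a family of superuniformities. -/
def suSup (S : Set (Set (Filter (α × α)))) : Set (Filter (α × α)) :=
  filIdealGen (filComps (⋃₀ S))

/-- An ideal in the lattice of binary relations on a set: nonempty, downward
closed, and closed under finite unions (= finite joins). -/
def IsIdeal (ℐ : Set (Set (α × α))) : Prop :=
  ℐ.Nonempty ∧ (∀ R ∈ ℐ, ∀ T ⊆ R, T ∈ ℐ) ∧ (∀ R ∈ ℐ, ∀ S ∈ ℐ, R ∪ S ∈ ℐ)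

/-- A superequivalence: an ideal of relations containing the diagonal, closed
under relational opposites, and closed under composition of relations. -/
def IsSuperEq (ℐ : Set (Set (α × α))) : Prop :=
  IsIdeal ℐ ∧ idRel ∈ ℐ ∧ (∀ R ∈ ℐ, Prod.swap ⁻¹' R ∈ ℐ) ∧
    (∀ R ∈ ℐ, ∀ S ∈ ℐ, compRel R S ∈ ℐ)

/-- Composition of ideals of relations: the ideal generated by the compositions
`R ○ S` of members (this generating family is directed, so the generated ideal
is its downward closure). -/
def idealComp (ℐ 𝒥 : Set (Set (α × α))) : Set (Set (α × α)) :=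
  {T | ∃ R ∈ ℐ, ∃ S ∈ 𝒥, T ⊆ compRel R S}

/-- Composition of a nonempty list of relations. -/
def listComp : List (Set (α × α)) → Set (α × α)
  | [] => idRel
  | [R] => R
  | R :: S :: l => compRel R (listComp (S :: l))

/-- The ideal of relations generated by a set `G` of relations: everything
below a finite union of members of `G`. -/
def idealGen (G : Set (Set (α × α))) : Set (Set (α × α)) :=
  {T | ∃ s : Finset (Set (α × α)), ↑s ⊆ G ∧ T ⊆ ⋃₀ ↑s}

/-- The set of finite (nonempty) compositions of relations from `X`. -/
def comps (X : Set (Set (α × α))) : Set (Set (α × α)) :=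
  {T | ∃ l : List (Set (α × α)), l ≠ [] ∧ (∀ R ∈ l, R ∈ X) ∧ T = listComp l}

/-- The join of two superequivalences: the ideal generated by all finite
compositions of relations from their union. -/
def seJoin (ℐ 𝒥 : Set (Set (α × α))) : Set (Set (α × α)) :=
  idealGen (comps (ℐ ∪ 𝒥))

/-- The join of a family of superequivalences. -/
def seSup (S : Set (Set (Set (α × α)))) : Set (Set (α × α)) :=
  idealGen (comps (⋃₀ S))

/-- `Z(ℐ)`: the ideal of filters of relations generated by the principal
filters `𝓟 J` for `J ∈ ℐ` (a directed family, hence the downward closure). -/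
def Zmap (ℐ : Set (Set (α × α))) : Set (Filter (α × α)) :=
  {H | ∃ J ∈ ℐ, H ≤ 𝓟 J}

/-!
Every filter in `Z(ℐ)` lies below a principal filter `𝓟 J` with `J ∈ ℐ`, and join, opposite,
composition and meet of filters send principal filters to the principal filters of the union,
opposite, composition and intersection of relations. Hence every closure property of `Z(ℐ)` is
inherited from `ℐ`, and a finite composition of filters from `Z(⋃ S)` lies below the principal
filter of a finite composition of relations from `⋃ S`.
-/

lemma fComp_mono {F F' G G' : Filter (α × α)} (hF : F ≤ F') (hG : G ≤ G') :
    fComp F G ≤ fComp F' G' :=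
  Filter.lift_mono hF fun _ => Filter.lift'_mono hG le_rfl

lemma fComp_principal (U V : Set (α × α)) :
    fComp (𝓟 U) (𝓟 V) = 𝓟 (compRel U V) := by
  have hV : ∀ U' : Set (α × α), (𝓟 V).lift' (compRel U') = 𝓟 (compRel U' V) :=
    fun U' => Filter.lift'_principal fun _ _ h => by rintro p ⟨z, h₁, h₂⟩; exact ⟨z, h₁, h h₂⟩
  simp only [fComp, hV]
  exact Filter.lift_principal
    fun _ _ h => Filter.principal_mono.2 (by rintro p ⟨z, h₁, h₂⟩; exact ⟨z, h h₁, h₂⟩)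

lemma filListComp_map_principal :
    ∀ l : List (Set (α × α)), filListComp (l.map 𝓟) = 𝓟 (listComp l)
  | [] => rfl
  | [_] => rfl
  | R :: S :: l => by
    change fComp (𝓟 R) (filListComp ((S :: l).map 𝓟)) = 𝓟 (compRel R (listComp (S :: l)))
    rw [filListComp_map_principal (S :: l), fComp_principal]

lemma compRel_mem_comps {X : Set (Set (α × α))} {R T : Set (α × α)} (hR : R ∈ X)
    (hT : T ∈ comps X) : compRel R T ∈ comps X := by
  obtain ⟨_ | ⟨S, l⟩, hl, hlX, rfl⟩ := hT
  · exact absurd rfl hl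
  refine ⟨R :: S :: l, List.cons_ne_nil _ _, ?_, rfl⟩
  simpa [hR] using hlX

lemma principal_mem_filComps_Zmap {X : Set (Set (α × α))} {T : Set (α × α)}
    (hT : T ∈ comps X) : 𝓟 T ∈ filComps (Zmap X) := by
  obtain ⟨l, hl, hlX, rfl⟩ := hT
  refine ⟨l.map 𝓟, by simpa using hl, ?_, (filListComp_map_principal l).symm⟩
  simp only [List.mem_map, forall_exists_index, and_imp, forall_apply_eq_imp_iff₂]
  exact fun R hR => ⟨R, hlX R hR, le_rfl⟩

lemma exists_comps_of_mem_filComps_Zmap {X : Set (Set (α × α))} :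
    ∀ l : List (Filter (α × α)), l ≠ [] → (∀ F ∈ l, F ∈ Zmap X) →
      ∃ T ∈ comps X, filListComp l ≤ 𝓟 T
  | [], hl, _ => absurd rfl hl
  | [F], _, hlX => by
    obtain ⟨R, hR, hF⟩ := hlX F List.mem_cons_self
    exact ⟨R, ⟨[R], List.cons_ne_nil _ _, by simpa using hR, rfl⟩, hF⟩
  | F :: G :: l, _, hlX => by
    obtain ⟨R, hR, hF⟩ := hlX F List.mem_cons_self
    obtain ⟨T, hT, hGl⟩ := exists_comps_of_mem_filComps_Zmap (G :: l) (List.cons_ne_nil _ _)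
      fun H hH => hlX H (List.mem_cons_of_mem _ hH)
    exact ⟨compRel R T, compRel_mem_comps hR hT,
      (fComp_mono hF hGl).trans_eq (fComp_principal R T)⟩

lemma Finset.sup_principal {β : Type*} (s : Finset (Set β)) : s.sup 𝓟 = 𝓟 (⋃₀ ↑s) := by
  simp [Finset.sup_eq_iSup, Filter.iSup_principal, Set.sUnion_eq_biUnion]

lemma IsSuperEq.isLowerSet {ℐ : Set (Set (α × α))} (hℐ : IsSuperEq ℐ) : IsLowerSet ℐ :=
  fun _ _ hTR hR => hℐ.1.2.1 _ hR _ hTR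

lemma principal_mem_Zmap {ℐ : Set (Set (α × α))} {J : Set (α × α)} (hJ : J ∈ ℐ) :
    𝓟 J ∈ Zmap ℐ :=
  ⟨J, hJ, le_rfl⟩

lemma isSuperUnif_Zmap {ℐ : Set (Set (α × α))} (hℐ : IsSuperEq ℐ) : IsSuperUnif (Zmap ℐ) := by
  obtain ⟨⟨⟨R, hR⟩, -, hunion⟩, hid, hswap, hcomp⟩ := hℐ
  refine ⟨⟨⟨𝓟 R, principal_mem_Zmap hR⟩, ?_, ?_⟩, principal_mem_Zmap hid, ?_, ?_⟩
  · rintro F ⟨J, hJ, hF⟩ G hG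
    exact ⟨J, hJ, hG.trans hF⟩
  · rintro F ⟨J, hJ, hF⟩ G ⟨K, hK, hG⟩
    exact ⟨J ∪ K, hunion J hJ K hK, Filter.sup_principal ▸ sup_le_sup hF hG⟩
  · rintro F ⟨J, hJ, hF⟩
    refine ⟨Prod.swap ⁻¹' J, hswap J hJ, ?_⟩
    rw [← Set.image_swap_eq_preimage_swap, ← Filter.map_principal]
    exact Filter.map_mono hF
  · rintro F ⟨J, hJ, hF⟩ G ⟨K, hK, hG⟩
    exact ⟨compRel J K, hcomp J hJ K hK, (fComp_mono hF hG).trans_eq (fComp_principal J K)⟩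

lemma Zmap_inter {ℐ 𝒥 : Set (Set (α × α))} (hℐ : IsLowerSet ℐ) (h𝒥 : IsLowerSet 𝒥) :
    Zmap (ℐ ∩ 𝒥) = Zmap ℐ ∩ Zmap 𝒥 := by
  ext H
  constructor
  · rintro ⟨J, ⟨hJℐ, hJ𝒥⟩, hH⟩
    exact ⟨⟨J, hJℐ, hH⟩, ⟨J, hJ𝒥, hH⟩⟩
  · rintro ⟨⟨J, hJ, hHJ⟩, ⟨K, hK, hHK⟩⟩
    exact ⟨J ∩ K, ⟨hℐ Set.inter_subset_left hJ, h𝒥 Set.inter_subset_right hK⟩,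
      Filter.inf_principal ▸ le_inf hHJ hHK⟩

lemma Zmap_sUnion (S : Set (Set (Set (α × α)))) : Zmap (⋃₀ S) = ⋃₀ (Zmap '' S) := by
  ext H
  simp only [Zmap, Set.mem_sUnion, Set.mem_image, Set.mem_ofPred_eq]
  constructor
  · rintro ⟨J, ⟨ℐ, hℐ, hJ⟩, hH⟩
    exact ⟨_, ⟨ℐ, hℐ, rfl⟩, J, hJ, hH⟩
  · rintro ⟨_, ⟨ℐ, hℐ, rfl⟩, J, hJ, hH⟩
    exact ⟨J, ⟨ℐ, hℐ, hJ⟩, hH⟩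

lemma Zmap_idealGen_subset {G : Set (Set (α × α))} {Y : Set (Filter (α × α))}
    (hGY : ∀ T ∈ G, 𝓟 T ∈ Y) : Zmap (idealGen G) ⊆ filIdealGen Y := by
  classical
  rintro H ⟨J, ⟨s, hsG, hJs⟩, hHJ⟩
  refine ⟨s.image 𝓟, ?_, ?_⟩
  · rw [Finset.coe_image, Set.image_subset_iff]
    exact fun T hT => hGY T (hsG hT)
  · rw [Finset.sup_image, Function.id_comp, Finset.sup_principal]
    exact hHJ.trans (Filter.principal_mono.2 hJs)

lemma filIdealGen_subset_Zmap {G : Set (Set (α × α))} {Y : Set (Filter (α × α))}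
    (hYG : ∀ F ∈ Y, ∃ T ∈ G, F ≤ 𝓟 T) : filIdealGen Y ⊆ Zmap (idealGen G) := by
  classical
  choose! g hgG hFg using hYG
  rintro H ⟨t, htY, hHt⟩
  refine ⟨⋃₀ ↑(t.image g), ⟨t.image g, ?_, subset_rfl⟩, ?_⟩
  · rw [Finset.coe_image, Set.image_subset_iff]
    exact fun F hF => hgG F (htY hF)
  · rw [← Finset.sup_principal, Finset.sup_image]
    exact hHt.trans (Finset.sup_mono_fun fun F hF => hFg F (htY hF))

lemma Zmap_idealGen_comps (X : Set (Set (α × α))) :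
    Zmap (idealGen (comps X)) = filIdealGen (filComps (Zmap X)) := by
  refine (Zmap_idealGen_subset fun T => principal_mem_filComps_Zmap).antisymm
    (filIdealGen_subset_Zmap ?_)
  rintro _ ⟨l, hl, hlX, rfl⟩
  exact exists_comps_of_mem_filComps_Zmap l hl hlX

theorem stmt18 (ℐ : Set (Set (α × α))) (hI : IsSuperEq ℐ) :
    IsSuperUnif (Zmap ℐ) ∧
      (∀ 𝒥 : Set (Set (α × α)), IsSuperEq 𝒥 →
        Zmap (ℐ ∩ 𝒥) = Zmap ℐ ∩ Zmap 𝒥) ∧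
      (∀ S : Set (Set (Set (α × α))), (∀ ℐ' ∈ S, IsSuperEq ℐ') →
        Zmap (seSup S) = suSup (Zmap '' S)) := by
  refine ⟨isSuperUnif_Zmap hI, fun 𝒥 h𝒥 => Zmap_inter hI.isLowerSet h𝒥.isLowerSet,
    fun S _ => ?_⟩
  rw [seSup, suSup, ← Zmap_sUnion, Zmap_idealGen_comps]
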